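/- For all β > 0 and γ > 0 there exists a constant c such that the following holds for all integers d ≥ 0, m ≥ 1, and every finite field F with |F| ≥ c·(d+1). Let g : F^m → F be the evaluation of a polynomial of total degree at most d, let f : F^m → F satisfy d(f, g) < 1/2 - β, let Q be any degree-d line polynomial family for f, and let Corr be any correction function for (f, Q). Then d(Corr, g) ≤ γ. -/

import Mathlib

/-!
Write `B = {f ≠ g}` and call a pair `(x, h)` bad when `Q x h (0) ≠ g x`. On a bad pair the
restriction of `g` to the line `t ↦ x + t • h` is a degree-`d` polynomial different from
`Q x h`; the two share at most `d` agreements with `f`, and `Q x h` agrees at least as often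
as `g`, so the line meets `B` in at least `(|F| - d) / 2` points. Since `|B| < (1/2 - β) |F^m|`
and `d ≤ β |F|`, this exceeds the expected number `|F| |B| / |F^m|` by `β |F| / 2`. Two
distinct points of a uniformly random line are independent and uniform, so the number of
hits has variance at most `|F| / 4`, and Chebyshev bounds the fraction of bad pairs by
`1 / (β² |F|)`. Where `Corr x ≠ g x`, plurality forces at least half of the directions `h`
to be bad, so `d(Corr, g) ≤ 2 / (β² |F|) ≤ γ` once `|F| ≥ 2 / (β² γ)`.
-/

/-- `Q` is a degree-`d` line polynomial family for `f`: each `Q x h` is a univariate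
polynomial of degree at most `d` that maximizes, among all univariate polynomials of
degree at most `d`, the number of `t ∈ F` with `Q x h (t) = f (x + t • h)`. -/
def IsLinePolyFamily (F : Type) [Field F] [Fintype F] [DecidableEq F]
    (m d : ℕ) (f : (Fin m → F) → F)
    (Q : (Fin m → F) → (Fin m → F) → Polynomial F) : Prop :=
  ∀ x h : Fin m → F, (Q x h).natDegree ≤ d ∧
    ∀ R : Polynomial F, R.natDegree ≤ d →
      (Finset.univ.filter fun t : F => R.eval t = f (x + t • h)).card ≤
      (Finset.univ.filter fun t : F => (Q x h).eval t = f (x + t • h)).card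

/-- `Corr` is a correction function for `(f, Q)`: for each `x`, `Corr x` is a
plurality value of `{Q x h (0) : h ∈ F^m}`. -/
def IsCorrection (F : Type) [Field F] [Fintype F] [DecidableEq F]
    (m : ℕ) (Q : (Fin m → F) → (Fin m → F) → Polynomial F)
    (Corr : (Fin m → F) → F) : Prop :=
  ∀ (x : Fin m → F) (a : F),
    (Finset.univ.filter fun h : Fin m → F => (Q x h).eval 0 = a).card ≤
    (Finset.univ.filter fun h : Fin m → F => (Q x h).eval 0 = Corr x).card

/-- `δ_f(Q)`: the fraction of pairs `(x,h) ∈ F^m × F^m` with `f x ≠ Q x h (0)`. -/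
noncomputable def lineDelta (F : Type) [Field F] [Fintype F] [DecidableEq F]
    (m : ℕ) (f : (Fin m → F) → F)
    (Q : (Fin m → F) → (Fin m → F) → Polynomial F) : ℝ :=
  ((Finset.univ.filter fun z : (Fin m → F) × (Fin m → F) =>
      f z.1 ≠ (Q z.1 z.2).eval 0).card : ℝ) / (Fintype.card F : ℝ) ^ (2 * m)

/-- `d(f,g)`: the fraction of points `x ∈ F^m` with `f x ≠ g x`. -/
noncomputable def fdist (F : Type) [Field F] [Fintype F] [DecidableEq F]
    (m : ℕ) (f g : (Fin m → F) → F) : ℝ :=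
  ((Finset.univ.filter fun x : Fin m → F => f x ≠ g x).card : ℝ) /
    (Fintype.card F : ℝ) ^ m

open Finset Polynomial

theorem MvPolynomial.exists_natDegree_le_eval_add_smul {σ R : Type*} [CommRing R]
    (P : MvPolynomial σ R) (x h : σ → R) :
    ∃ p : R[X], p.natDegree ≤ P.totalDegree ∧ ∀ t, p.eval t = eval (x + t • h) P := by
  refine ⟨aeval (fun i => Polynomial.C (h i) * Polynomial.X + Polynomial.C (x i)) P, ?_,
    fun t => ?_⟩
  · rw [aeval_def, eval₂_eq]
    refine natDegree_sum_le_of_forall_le _ _ fun s hs => natDegree_C_mul_le _ _ |>.trans ?_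
    refine (natDegree_prod_le _ _).trans <|
      (sum_le_sum fun i _ => ?_).trans (le_totalDegree hs)
    exact natDegree_pow_le.trans <| (Nat.mul_le_mul_left (s i) natDegree_linear_le).trans_eq
      (mul_one _)
  · rw [← Polynomial.coe_aeval_eq_eval, ← AlgHom.comp_apply, comp_aeval]
    change _ = aeval (x + t • h) P
    congr 2 with i
    simp only [Polynomial.aeval_add, Polynomial.aeval_mul, Polynomial.aeval_C, Polynomial.aeval_X,
      Algebra.algebraMap_self, RingHom.id_apply, Pi.add_apply, Pi.smul_apply, smul_eq_mul]
    ring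

namespace Polynomial

variable {R : Type*} [CommRing R] [IsDomain R] [Fintype R] [DecidableEq R] {p q : R[X]} {d : ℕ}

theorem card_eval_eq_le (hp : p.natDegree ≤ d) (hq : q.natDegree ≤ d) (hpq : p ≠ q) :
    #{t | p.eval t = q.eval t} ≤ d := by
  by_contra! hlt
  have hlt' (r : R[X]) (hr : r.natDegree ≤ d) : r.degree < #{t | p.eval t = q.eval t} :=
    (degree_le_of_natDegree_le hr).trans_lt (by exact_mod_cast hlt)
  exact hpq <| eq_of_degrees_lt_of_eval_finset_eq _ (hlt' p hp) (hlt' q hq)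
    fun t ht => (mem_filter.1 ht).2

/-- The agreement sets of `p` and `q` with `φ` overlap in at most `d` points. -/
theorem two_mul_card_eval_eq_le (hp : p.natDegree ≤ d) (hq : q.natDegree ≤ d) (hpq : p ≠ q)
    (φ : R → R) (hqp : #{t | q.eval t = φ t} ≤ #{t | p.eval t = φ t}) :
    2 * #{t | q.eval t = φ t} ≤ Fintype.card R + d := by
  set Ap : Finset R := {t | p.eval t = φ t}
  set Aq : Finset R := {t | q.eval t = φ t}
  have hinter : #(Ap ∩ Aq) ≤ d := by
    refine (card_le_card fun t ht => ?_).trans (card_eval_eq_le hp hq hpq)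
    simp only [Ap, Aq, mem_inter, mem_filter, mem_univ, true_and] at ht ⊢
    rw [ht.1, ht.2]
  have := card_union_add_card_inter Ap Aq
  have := card_le_univ (Ap ∪ Aq)
  omega

end Polynomial

theorem card_le_two_mul_card_ne_of_plurality {ι α : Type*} [Fintype ι] [DecidableEq α]
    (φ : ι → α) {a c : α} (hc : ∀ b, #{i | φ i = b} ≤ #{i | φ i = c}) (hca : c ≠ a) :
    Fintype.card ι ≤ 2 * #{i | φ i ≠ a} := by
  classical
  have hsplit : #{i | φ i = a} + #{i | φ i ≠ a} = Fintype.card ι :=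
    card_filter_add_card_filter_not _
  have hdisj : #{i | φ i = a} + #{i | φ i = c} ≤ Fintype.card ι := by
    rw [← card_union_of_disjoint (disjoint_filter.2 fun i _ ha hc' => hca (hc'.symm.trans ha))]
    exact card_le_univ _
  have := hc a
  omega

section LineSampling

variable {F V : Type*} [Field F] [AddCommGroup V] [Module F V] [Fintype V]
  [DecidableEq V]

theorem card_add_smul_mem (B : Finset V) (t : F) :
    #{z : V × V | z.1 + t • z.2 ∈ B} = #B * Fintype.card V := by
  rw [← card_univ (α := V), ← card_product]
  refine card_nbij' (fun z => (z.1 + t • z.2, z.2)) (fun w => (w.1 - t • w.2, w.2)) ?_ ?_ ?_ ?_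
    <;> intro z hz <;> simp_all

theorem card_add_smul_mem_and_add_smul_mem (B : Finset V) {t t' : F} (htt' : t ≠ t') :
    #{z : V × V | z.1 + t • z.2 ∈ B ∧ z.1 + t' • z.2 ∈ B} = #B * #B := by
  obtain ⟨s, hs⟩ : ∃ s : F, s * (t' - t) = 1 :=
    ⟨_, inv_mul_cancel₀ (sub_ne_zero.mpr htt'.symm)⟩
  rw [← card_product]
  refine card_nbij' (fun z => (z.1 + t • z.2, z.1 + t' • z.2))
    (fun w => (w.1 - (t * s) • (w.2 - w.1), s • (w.2 - w.1))) ?_ ?_ ?_ ?_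
  · intro z hz; simp_all
  · intro w hw
    simp only [coe_product, Set.mem_prod, mem_coe, coe_filter, mem_univ, true_and,
      Set.mem_ofPred_eq] at hw ⊢
    convert hw using 2 <;> match_scalars <;> grind
  · intro z _
    ext <;> simp only <;> match_scalars <;> grind
  · intro w _
    ext <;> simp only <;> match_scalars <;> grind

variable [Fintype F]

variable (F) in
def lineHits (B : Finset V) (x h : V) : ℕ := #{t : F | x + t • h ∈ B}

theorem sum_lineHits (B : Finset V) :
    ∑ z : V × V, lineHits F B z.1 z.2 = Fintype.card F * (#B * Fintype.card V) := by
  simp only [lineHits, card_filter]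
  rw [sum_comm]
  simp only [← card_filter, card_add_smul_mem, sum_const, card_univ, smul_eq_mul]

theorem sum_lineHits_sq (B : Finset V) :
    ∑ z : V × V, lineHits F B z.1 z.2 ^ 2 =
      Fintype.card F * (#B * Fintype.card V + (Fintype.card F - 1) * #B ^ 2) := by
  have hpairs (t : F) : ∑ t' : F, #{z : V × V | z.1 + t • z.2 ∈ B ∧ z.1 + t' • z.2 ∈ B} =
      #B * Fintype.card V + (Fintype.card F - 1) * #B ^ 2 := by
    classical
    rw [← add_sum_erase _ _ (mem_univ t), sum_congr rfl fun t' ht' =>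
      card_add_smul_mem_and_add_smul_mem B (ne_of_mem_erase ht').symm]
    simp [card_add_smul_mem, sq]
  calc ∑ z : V × V, lineHits F B z.1 z.2 ^ 2
      = ∑ z : V × V, ∑ t : F, ∑ t' : F,
          if z.1 + t • z.2 ∈ B ∧ z.1 + t' • z.2 ∈ B then 1 else 0 := by
        simp only [lineHits, card_filter, sq, sum_mul_sum, ite_zero_mul_ite_zero, mul_one]
    _ = ∑ t : F, ∑ t' : F, #{z : V × V | z.1 + t • z.2 ∈ B ∧ z.1 + t' • z.2 ∈ B} := by
        simp only [card_filter]
        rw [sum_comm]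
        exact sum_congr rfl fun _ _ => sum_comm
    _ = _ := by simp [hpairs]

theorem sum_sq_card_mul_lineHits_sub (B : Finset V) :
    ∑ z : V × V, ((Fintype.card V : ℝ) * lineHits F B z.1 z.2 - Fintype.card F * #B) ^ 2 =
      Fintype.card F * #B * Fintype.card V ^ 2 * (Fintype.card V - #B) := by
  have h1 : ∑ z : V × V, (lineHits F B z.1 z.2 : ℝ) =
      Fintype.card F * (#B * Fintype.card V) := by
    exact_mod_cast sum_lineHits B
  have h2 : ∑ z : V × V, (lineHits F B z.1 z.2 : ℝ) ^ 2 =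
      Fintype.card F * (#B * Fintype.card V + (Fintype.card F - 1) * #B ^ 2) := by
    have := congrArg (Nat.cast (R := ℝ)) (sum_lineHits_sq (F := F) B)
    push_cast [Nat.cast_sub Fintype.card_pos] at this
    exact this
  simp only [sub_sq, mul_pow, sum_add_distrib, sum_sub_distrib, ← mul_sum, ← sum_mul, sum_const,
    card_univ, Fintype.card_prod, nsmul_eq_mul, h1, h2]
  push_cast
  ring

theorem card_lineHits_ge_le (B : Finset V) {ε : ℝ} (hε : 0 < ε) :
    (#{z : V × V | (#B / Fintype.card V + ε) * Fintype.card F ≤ lineHits F B z.1 z.2} : ℝ) ≤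
      Fintype.card V ^ 2 / (4 * ε ^ 2 * Fintype.card F) := by
  set N : ℝ := (Fintype.card V : ℝ)
  set q : ℝ := (Fintype.card F : ℝ)
  set S := ({z : V × V | (#B / N + ε) * q ≤ lineHits F B z.1 z.2} : Finset (V × V))
  have hN : 0 < N := by simp only [N]; exact_mod_cast Fintype.card_pos
  have hq : 0 < q := by simp only [q]; exact_mod_cast Fintype.card_pos
  have hdev : ∀ z ∈ S, (N * ε * q) ^ 2 ≤ (N * lineHits F B z.1 z.2 - q * #B) ^ 2 := by
    intro z hz
    have hz : (#B / N + ε) * q ≤ lineHits F B z.1 z.2 := (mem_filter.1 hz).2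
    have : N * ε * q ≤ N * lineHits F B z.1 z.2 - q * #B := by
      have := mul_le_mul_of_nonneg_left hz hN.le
      rw [add_mul, mul_add, div_mul_eq_mul_div, mul_div_cancel₀ _ hN.ne'] at this
      linarith
    exact pow_le_pow_left₀ (by positivity) this 2
  have hB : (#B : ℝ) * (N - #B) ≤ N ^ 2 / 4 := by nlinarith [sq_nonneg (N - 2 * #B)]
  have hS : #S * (N * ε * q) ^ 2 ≤ q * N ^ 2 * (N ^ 2 / 4) := calc
    #S * (N * ε * q) ^ 2 ≤ ∑ z ∈ S, (N * lineHits F B z.1 z.2 - q * #B) ^ 2 := by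
      rw [← nsmul_eq_mul]; exact card_nsmul_le_sum _ _ _ hdev
    _ ≤ ∑ z : V × V, (N * lineHits F B z.1 z.2 - q * #B) ^ 2 :=
      sum_le_sum_of_subset_of_nonneg (subset_univ S) fun _ _ _ => sq_nonneg _
    _ = q * N ^ 2 * (#B * (N - #B)) := by rw [sum_sq_card_mul_lineHits_sub]; ring
    _ ≤ q * N ^ 2 * (N ^ 2 / 4) := by gcongr
  rw [le_div_iff₀ (by positivity)]
  refine le_of_mul_le_mul_right ?_ (by positivity : 0 < N ^ 2 * q / 4)
  linarith

end LineSampling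

section LineFamilies

variable {F : Type} [Field F] [Fintype F] [DecidableEq F] {m d : ℕ}
  {f : (Fin m → F) → F} {Q : (Fin m → F) → (Fin m → F) → F[X]}

theorem fdist_eq (f g : (Fin m → F) → F) :
    fdist F m f g = #{x | f x ≠ g x} / Fintype.card (Fin m → F) := by
  simp [fdist]

theorem IsLinePolyFamily.card_le_two_mul_lineHits_add (hQ : IsLinePolyFamily F m d f Q)
    {P : MvPolynomial (Fin m) F} (hP : P.totalDegree ≤ d) {x h : Fin m → F}
    (hxh : (Q x h).eval 0 ≠ MvPolynomial.eval x P) :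
    Fintype.card F ≤ 2 * lineHits F {y | f y ≠ MvPolynomial.eval y P} x h + d := by
  obtain ⟨R, hRdeg, hR⟩ := P.exists_natDegree_le_eval_add_smul x h
  have hRQ : Q x h ≠ R := by
    intro hQR
    apply hxh
    rw [hQR, hR, zero_smul, add_zero]
  have hsplit : #{t | R.eval t = f (x + t • h)} + lineHits F {y | f y ≠ MvPolynomial.eval y P} x h
      = Fintype.card F := by
    simp only [lineHits, hR, mem_filter, mem_univ, true_and, ne_comm (a := f _)]
    exact card_filter_add_card_filter_not _
  have := two_mul_card_eval_eq_le (hQ x h).1 (hRdeg.trans hP) hRQ _ ((hQ x h).2 R (hRdeg.trans hP))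
  omega

theorem IsLinePolyFamily.card_eval_zero_ne_le (hQ : IsLinePolyFamily F m d f Q)
    {P : MvPolynomial (Fin m) F} (hP : P.totalDegree ≤ d) {β : ℝ} (hβ : 0 < β)
    (hd : d ≤ β * Fintype.card F) (hfP : fdist F m f (MvPolynomial.eval · P) < 1 / 2 - β) :
    (#{z : (Fin m → F) × (Fin m → F) | (Q z.1 z.2).eval 0 ≠ MvPolynomial.eval z.1 P} : ℝ) ≤
      Fintype.card (Fin m → F) ^ 2 / (β ^ 2 * Fintype.card F) := by
  set B : Finset (Fin m → F) := {y | f y ≠ MvPolynomial.eval y P}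
  have hq : (0 : ℝ) < Fintype.card F := by exact_mod_cast Fintype.card_pos
  have hB : (#B / Fintype.card (Fin m → F) : ℝ) * Fintype.card F <
      (1 / 2 - β) * Fintype.card F := by
    rw [fdist_eq] at hfP
    exact mul_lt_mul_of_pos_right hfP hq
  set Far : Finset ((Fin m → F) × (Fin m → F)) :=
    {z | (#B / Fintype.card (Fin m → F) + β / 2) * Fintype.card F ≤ lineHits F B z.1 z.2}
  have hsub : ({z | (Q z.1 z.2).eval 0 ≠ MvPolynomial.eval z.1 P} :
      Finset ((Fin m → F) × (Fin m → F))) ⊆ Far := by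
    intro z hz
    have := hQ.card_le_two_mul_lineHits_add hP (mem_filter.1 hz).2
    have : (Fintype.card F : ℝ) ≤ 2 * lineHits F B z.1 z.2 + d := by exact_mod_cast this
    simp only [Far, mem_filter, mem_univ, true_and]
    linarith
  calc _ ≤ (#Far : ℝ) := by exact_mod_cast card_le_card hsub
    _ ≤ Fintype.card (Fin m → F) ^ 2 / (4 * (β / 2) ^ 2 * Fintype.card F) :=
        card_lineHits_ge_le B (half_pos hβ)
    _ = Fintype.card (Fin m → F) ^ 2 / (β ^ 2 * Fintype.card F) := by ring

theorem IsCorrection.card_ne_mul_card_le {Corr : (Fin m → F) → F} (hCorr : IsCorrection F m Q Corr)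
    (g : (Fin m → F) → F) :
    #{x | Corr x ≠ g x} * Fintype.card (Fin m → F) ≤
      2 * #{z : (Fin m → F) × (Fin m → F) | (Q z.1 z.2).eval 0 ≠ g z.1} := by
  have hfiber : #{z : (Fin m → F) × (Fin m → F) | (Q z.1 z.2).eval 0 ≠ g z.1} =
      ∑ x, #{h | (Q x h).eval 0 ≠ g x} := by
    simp only [card_filter, Fintype.sum_prod_type]
  calc #{x | Corr x ≠ g x} * Fintype.card (Fin m → F)
      = ∑ x ∈ {x | Corr x ≠ g x}, Fintype.card (Fin m → F) := by rw [sum_const, smul_eq_mul]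
    _ ≤ ∑ x ∈ {x | Corr x ≠ g x}, 2 * #{h | (Q x h).eval 0 ≠ g x} :=
        sum_le_sum fun x hx =>
          card_le_two_mul_card_ne_of_plurality _ (hCorr x) (mem_filter.1 hx).2
    _ ≤ ∑ x, 2 * #{h | (Q x h).eval 0 ≠ g x} := sum_le_sum_of_subset (subset_univ _)
    _ = _ := by rw [← mul_sum, hfiber]

theorem IsCorrection.fdist_le (hQ : IsLinePolyFamily F m d f Q) {Corr : (Fin m → F) → F}
    (hCorr : IsCorrection F m Q Corr) {P : MvPolynomial (Fin m) F} (hP : P.totalDegree ≤ d)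
    {β : ℝ} (hβ : 0 < β) (hd : d ≤ β * Fintype.card F)
    (hfP : fdist F m f (MvPolynomial.eval · P) < 1 / 2 - β) :
    fdist F m Corr (MvPolynomial.eval · P) ≤ 2 / (β ^ 2 * Fintype.card F) := by
  have hN : (0 : ℝ) < Fintype.card (Fin m → F) := by exact_mod_cast Fintype.card_pos
  have hbad := hQ.card_eval_zero_ne_le hP hβ hd hfP
  have hcorr : (#{x | Corr x ≠ MvPolynomial.eval x P} * Fintype.card (Fin m → F) : ℝ) ≤
      2 * #{z : (Fin m → F) × (Fin m → F) | (Q z.1 z.2).eval 0 ≠ MvPolynomial.eval z.1 P} := by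
    exact_mod_cast hCorr.card_ne_mul_card_le _
  rw [fdist_eq, div_le_iff₀ hN]
  refine le_of_mul_le_mul_right ?_ hN
  calc _ ≤ _ := hcorr
    _ ≤ 2 * (Fintype.card (Fin m → F) ^ 2 / (β ^ 2 * Fintype.card F)) := by gcongr
    _ = _ := by ring

end LineFamilies

/-- For all `β > 0` and `γ > 0` there is a constant `c > 0` such that
for all `d ≥ 0`, `m ≥ 1` and finite fields `F` with `|F| ≥ c·(d+1)`: if `g` is the
evaluation of a polynomial of total degree at most `d`, `f` satisfies
`d(f,g) < 1/2 - β`, `Q` is a degree-`d` line polynomial family for `f`, and `Corr`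
is a correction function for `(f,Q)`, then `d(Corr, g) ≤ γ`. -/
theorem corr_close_of_half_close (β γ : ℝ) (hβ : 0 < β) (hγ : 0 < γ) :
    ∃ c : ℝ, 0 < c ∧
    ∀ (F : Type) [Field F] [Fintype F] [DecidableEq F] (d m : ℕ),
      1 ≤ m → c * ((d : ℝ) + 1) ≤ (Fintype.card F : ℝ) →
      ∀ (g f : (Fin m → F) → F),
        (∃ Pg : MvPolynomial (Fin m) F, Pg.totalDegree ≤ d ∧
          ∀ y : Fin m → F, MvPolynomial.eval y Pg = g y) →
        fdist F m f g < 1 / 2 - β →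
      ∀ (Q : (Fin m → F) → (Fin m → F) → Polynomial F),
        IsLinePolyFamily F m d f Q →
      ∀ (Corr : (Fin m → F) → F),
        IsCorrection F m Q Corr →
      fdist F m Corr g ≤ γ := by
  refine ⟨1 / β + 2 / (β ^ 2 * γ), by positivity, ?_⟩
  intro F _ _ _ d m _ hcard g f ⟨P, hP, hPg⟩ hfg Q hQ Corr hCorr
  obtain rfl : (MvPolynomial.eval · P) = g := funext hPg
  have hq : (0 : ℝ) < Fintype.card F := by exact_mod_cast Fintype.card_pos
  have hd : (d : ℝ) ≤ β * Fintype.card F := by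
    have : 1 / β * ((d : ℝ) + 1) ≤ Fintype.card F := by
      refine le_trans ?_ hcard
      gcongr
      exact le_add_of_nonneg_right (by positivity)
    rw [div_mul_eq_mul_div, one_mul, div_le_iff₀ hβ] at this
    linarith
  have hqγ : 2 / (β ^ 2 * γ) ≤ Fintype.card F := by
    refine le_trans ?_ hcard
    nlinarith [show (0 : ℝ) ≤ 1 / β by positivity, show (0 : ℝ) ≤ 2 / (β ^ 2 * γ) by positivity,
      show (0 : ℝ) ≤ d by positivity]
  calc fdist F m Corr (MvPolynomial.eval · P) ≤ 2 / (β ^ 2 * Fintype.card F) :=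
        hCorr.fdist_le hQ hP hβ hd hfg
    _ ≤ γ := by
      rw [div_le_iff₀ (by positivity)] at hqγ ⊢
      nlinarith
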